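/- arXiv:2409.02211 — 2 statements merged into one kernel-verified Lean document; each statement's English description precedes it below -/
import Mathlib

section
/- In the exterior algebra over ℝ on odd generators t^δ_j (δ ∈ Δₙ∖{0}, j ∈ {1,…,m}), with Sₙ acting by s·t^δ_j = t^{s·δ}_j: if T = t^{γ₁}_{i₁}⋯t^{γ_q}_{i_q} is a primitive monomial whose weights γ₁,…,γ_q all have pairwise distinct lengths, then Σ_{s∈Sₙ} s·T ≠ 0. -/
open Finset

/-- `γ : Fin q → Finset (Fin n)` is the *standard decomposition* of
`α₁ + ⋯ + α_k` (where `k` is the total size): the blocks are nonempty consecutive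
intervals of `{0,…,k-1}` of weakly increasing sizes. -/
def IsStdDecomp {n q : ℕ} (γ : Fin q → Finset (Fin n)) : Prop :=
  (∀ j, (γ j).Nonempty) ∧
  (∀ j l : Fin q, j ≤ l → (γ j).card ≤ (γ l).card) ∧
  ∀ j : Fin q, γ j = Finset.univ.filter (fun i : Fin n =>
      (∑ l ∈ Finset.univ.filter (· < j), (γ l).card) ≤ i.val ∧
      i.val < ∑ l ∈ Finset.univ.filter (· ≤ j), (γ l).card)

/-- A monomial `t^{γ₁}_{i₁} ⋯ t^{γ_q}_{i_q}` is *primitive* if `(γ₁,…,γ_q)` is the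
standard decomposition and indices on equal-length blocks are weakly increasing. -/
def IsPrimitive {n q : ℕ} (γ : Fin q → Finset (Fin n)) (i : Fin q → ℕ) : Prop :=
  IsStdDecomp γ ∧ ∀ j l : Fin q, j < l → (γ j).card = (γ l).card → i j ≤ i l

noncomputable section

/-- The exterior algebra over `ℝ` on odd generators `t^δ_j`, `δ ∈ Δₙ`, `j ∈ ℕ`. -/
abbrev ExtAlg (n : ℕ) : Type :=
  ExteriorAlgebra ℝ ((Finset (Fin n) × ℕ) →₀ ℝ)

/-- The odd generator `t^δ_j`. -/
def tgen {n : ℕ} (δ : Finset (Fin n)) (j : ℕ) : ExtAlg n :=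
  ExteriorAlgebra.ι ℝ (Finsupp.single (δ, j) (1 : ℝ))

/-- The action of `s ∈ Sₙ` on the exterior algebra, `s · t^δ_j = t^{s·δ}_j`. -/
def permAct {n : ℕ} (s : Equiv.Perm (Fin n)) : ExtAlg n →ₐ[ℝ] ExtAlg n :=
  ExteriorAlgebra.lift ℝ
    ⟨(ExteriorAlgebra.ι ℝ).comp
        (Finsupp.lmapDomain ℝ ℝ (fun p : Finset (Fin n) × ℕ => (p.1.image s, p.2))),
      fun m => ExteriorAlgebra.ι_sq_zero _⟩

/-- The ordered monomial `t^{γ₁}_{i₁} ⋯ t^{γ_q}_{i_q}`. -/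
def extMono {n q : ℕ} (γ : Fin q → Finset (Fin n)) (i : Fin q → ℕ) : ExtAlg n :=
  (List.ofFn fun j => tgen (γ j) (i j)).prod

end

lemma permAct_tgen {n : ℕ} (s : Equiv.Perm (Fin n)) (δ : Finset (Fin n)) (j : ℕ) :
    permAct s (tgen δ j) = tgen (δ.image s) j := by
  rw [permAct, tgen, ExteriorAlgebra.lift_ι_apply]
  simp [tgen, Finsupp.mapDomain_single]

lemma permAct_extMono {n q : ℕ} (s : Equiv.Perm (Fin n))
    (γ : Fin q → Finset (Fin n)) (i : Fin q → ℕ) :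
    permAct s (extMono γ i) = extMono (fun j => (γ j).image s) i := by
  rw [extMono, extMono, map_list_prod, List.map_ofFn]
  have : (⇑(permAct s) ∘ fun j => tgen (γ j) (i j))
      = fun j => tgen ((γ j).image s) (i j) :=
    funext fun j => permAct_tgen s (γ j) (i j)
  rw [this]

/-- if the weights of a primitive monomial `T` have pairwise distinct
lengths, then the symmetrization `Σ_{s∈Sₙ} s·T` is nonzero. -/
theorem symmetrized_primitive_ne_zero_of_distinct_lengths {n q : ℕ}
    (γ : Fin q → Finset (Fin n)) (i : Fin q → ℕ)
    (hprim : IsPrimitive γ i)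
    (hdist : Function.Injective fun j => (γ j).card) :
    (∑ s : Equiv.Perm (Fin n), permAct s (extMono γ i)) ≠ 0 := by
  classical
  set M := ((Finset (Fin n) × ℕ) →₀ ℝ) with hM
  let L : M →ₗ[ℝ] (Fin q → ℝ) := LinearMap.pi fun l => Finsupp.lapply (γ l, i l)
  let F : M [⋀^Fin q]→ₗ[ℝ] ℝ := Matrix.detRowAlternating.compLinearMap L
  let f : ExteriorAlgebra ℝ M →ₗ[ℝ] ℝ :=
    ExteriorAlgebra.liftAlternating
      (Function.update (fun k => (0 : M [⋀^Fin k]→ₗ[ℝ] ℝ)) q F)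
  -- value of f on a monomial
  have hf : ∀ γ' : Fin q → Finset (Fin n),
      f (extMono γ' i) = Matrix.det (Matrix.of fun j l =>
          (Finsupp.single ((γ' j), i j) (1:ℝ) : M) (γ l, i l)) := by
    intro γ'
    have : extMono γ' i
        = ExteriorAlgebra.ιMulti ℝ q (fun j => (Finsupp.single ((γ' j), i j) (1:ℝ) : M)) := by
      rw [ExteriorAlgebra.ιMulti_apply]; rfl
    rw [this, show f = ⇑f from rfl]
    rw [ExteriorAlgebra.liftAlternating_apply_ιMulti, Function.update_self]
    rfl
  -- matrices are diagonal
  have hdiag : ∀ s : Equiv.Perm (Fin n),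
      (Matrix.of fun j l => (Finsupp.single (((γ j).image s), i j) (1:ℝ) : M) (γ l, i l))
        = Matrix.diagonal (fun j => if (γ j).image s = γ j then (1:ℝ) else 0) := by
    intro s
    ext j l
    rw [Matrix.of_apply, Finsupp.single_apply]
    by_cases hjl : j = l
    · subst hjl
      simp [Matrix.diagonal_apply_eq, Prod.ext_iff]
    · rw [Matrix.diagonal_apply_ne _ hjl, if_neg]
      rintro h
      apply hjl
      apply hdist
      have h1 : (γ j).image s = γ l := (Prod.mk.injEq _ _ _ _ ▸ h).1
      have := Finset.card_image_of_injective (γ j) s.injective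
      simp only
      rw [← h1, this]
  -- each term is a 0/1 product
  have key : ∀ s : Equiv.Perm (Fin n),
      f (permAct s (extMono γ i)) = ∏ j, (if (γ j).image s = γ j then (1:ℝ) else 0) := by
    intro s
    rw [permAct_extMono, hf, hdiag, Matrix.det_diagonal]
  have hfsum : f (∑ s : Equiv.Perm (Fin n), permAct s (extMono γ i)) > 0 := by
    rw [map_sum]
    simp only [key]
    apply Finset.sum_pos'
    · intro s _
      apply Finset.prod_nonneg
      intro j _
      split <;> norm_num
    · refine ⟨1, Finset.mem_univ _, ?_⟩
      have : ∀ j : Fin q, (γ j).image (1 : Equiv.Perm (Fin n)) = γ j := by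
        intro j; simp
      simp [this]
  intro h
  rw [h, map_zero] at hfsum
  exact lt_irrefl 0 hfsum
end

section
/- Let T = t^{γ₁}_{i₁}⋯t^{γ_p}_{i_p} be a primitive monomial with ♯γⱼ = kⱼ > 0, in the supercommutative algebra on generators t^δ_j modulo the multiplicity-free ideal, and let ξ^{k₁}_{i₁}⋯ξ^{k_p}_{i_p} be the corresponding monomial in the free supercommutative algebra on generators ξᵏⱼ. Then Σ_{s∈Sₙ} s·T = 0 if and only if ξ^{k₁}_{i₁}⋯ξ^{k_p}_{i_p} = 0; and when both are nonzero, Σ_{s∈Sₙ} s·T = M · p*(ξ^{k₁}_{i₁}⋯ξ^{k_p}_{i_p}) for some nonzero scalar M. -/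
open Finset

noncomputable section

open MvPolynomial Finset

/-- Index type for the generators `t^δ_j`, `δ ∈ Δₙ∖{0}` (a nonempty subset of
`{1,…,n}`), `j ∈ ℕ`. -/
abbrev Vvar (n : ℕ) : Type := {δ : Finset (Fin n) // δ.Nonempty} × ℕ

/-- The polynomial algebra on the generators `t^δ_j` (even parity convention, so the
supercommutative algebra is commutative). -/
abbrev MFPoly (n : ℕ) : Type := MvPolynomial (Vvar n) ℝ

/-- The multiplicity-free ideal `I`, generated by the products of two generators whose
weights have non-disjoint supports (i.e. by the non-multiplicity-free elements). -/
def mfIdeal (n : ℕ) : Ideal (MFPoly n) :=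
  Ideal.span {p | ∃ (d d' : {δ : Finset (Fin n) // δ.Nonempty}) (j j' : ℕ),
    ¬ Disjoint d.1 d'.1 ∧ p = X (d, j) * X (d', j')}

/-- The action of `s ∈ Sₙ`: `s · t^δ_j = t^{s·δ}_j`. -/
def actMF {n : ℕ} (s : Equiv.Perm (Fin n)) : MFPoly n →ₐ[ℝ] MFPoly n :=
  rename fun p => (⟨p.1.1.image s, p.1.2.image s⟩, p.2)

end

noncomputable section
open MvPolynomial Finset

/-- Index type for the generators `ξᵏⱼ`, `k ∈ L∖{0} = {1,…,n}`, `j ∈ ℕ`. -/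
abbrev Avar (n : ℕ) : Type := {k : ℕ // 1 ≤ k ∧ k ≤ n} × ℕ

/-- The polynomial algebra on the generators `ξᵏⱼ` of the graded domain (even parity
convention). -/
abbrev GrPoly (n : ℕ) : Type := MvPolynomial (Avar n) ℝ

/-- The covering homomorphism `p*`, determined by `p*(ξᵏⱼ) = Σ_{♯δ=k} t^δ_j`. -/
def covHom (n : ℕ) : GrPoly n →ₐ[ℝ] MFPoly n :=
  MvPolynomial.aeval fun kj : Avar n =>
    ∑ d ∈ Finset.univ.filter
        (fun d : {δ : Finset (Fin n) // δ.Nonempty} => d.1.card = kj.1.1),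
      MvPolynomial.X (d, kj.2)

end

open MvPolynomial

lemma prod_X_eq_monomial'' {σ : Type*} {ι : Type*} (s : Finset ι) (v : ι → σ) :
    ∏ j ∈ s, (X (v j) : MvPolynomial σ ℝ) = monomial (∑ j ∈ s, Finsupp.single (v j) 1) 1 := by
  classical
  induction s using Finset.cons_induction with
  | empty => simp
  | cons a s ha ih =>
      rw [prod_cons, sum_cons, ih, X, monomial_mul, one_mul]

lemma exists_perm_image {n p : ℕ} (γ δ : Fin p → Finset (Fin n))
    (hγ : ∀ j l, j ≠ l → Disjoint (γ j) (γ l))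
    (hδ : ∀ j l, j ≠ l → Disjoint (δ j) (δ l))
    (hcard : ∀ j, (δ j).card = (γ j).card) :
    ∃ s : Equiv.Perm (Fin n), ∀ j, (γ j).image s = δ j := by
  classical
  let gf : (Fin p → Finset (Fin n)) → Fin n → Option (Fin p) :=
    fun f x => (List.finRange p).find? (fun j => decide (x ∈ f j))
  have hmem : ∀ (f : Fin p → Finset (Fin n)), (∀ j l, j ≠ l → Disjoint (f j) (f l)) →
      ∀ x j, gf f x = some j ↔ x ∈ f j := by
    intro f hf x j
    constructor
    · intro h
      have := List.find?_some h
      simpa using this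
    · intro hx
      have hs : ((List.finRange p).find? (fun j => decide (x ∈ f j))).isSome := by
        rw [List.find?_isSome]
        exact ⟨j, List.mem_finRange j, by simpa using hx⟩
      obtain ⟨j', hj'⟩ := Option.isSome_iff_exists.mp hs
      have hx' : x ∈ f j' := by simpa using List.find?_some hj'
      have hjj : j' = j := by
        by_contra hne
        exact (Finset.disjoint_left.mp (hf j' j hne)) hx' hx
      rw [show gf f x = (List.finRange p).find? (fun j => decide (x ∈ f j)) from rfl, hj', hjj]
  have hfilt : ∀ (f : Fin p → Finset (Fin n)) (hf : ∀ j l, j ≠ l → Disjoint (f j) (f l)) (j : Fin p),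
      univ.filter (fun x => gf f x = some j) = f j := by
    intro f hf j
    ext x
    simp [hmem f hf x j]
  have hcards : ∀ (f : Fin p → Finset (Fin n)) (hf : ∀ j l, j ≠ l → Disjoint (f j) (f l)) (j : Fin p),
      Fintype.card {x // gf f x = some j} = (f j).card := by
    intro f hf j
    rw [Fintype.card_subtype, hfilt f hf j]
  have htot : ∀ (f : Fin p → Finset (Fin n)),
      n = ∑ o : Option (Fin p), Fintype.card {x // gf f x = o} := by
    intro f
    calc n = Fintype.card (Fin n) := (Fintype.card_fin n).symm
    _ = Fintype.card (Σ o : Option (Fin p), {x // gf f x = o}) :=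
        Fintype.card_congr (Equiv.sigmaFiberEquiv (gf f)).symm
    _ = ∑ o : Option (Fin p), Fintype.card {x // gf f x = o} := Fintype.card_sigma
  have hfib : ∀ o : Option (Fin p),
      Fintype.card {x // gf δ x = o} = Fintype.card {x // gf γ x = o} := by
    intro o
    match o with
    | some j => rw [hcards γ hγ j, hcards δ hδ j, hcard j]
    | none =>
        have h1 := htot γ
        have h2 := htot δ
        rw [Fintype.sum_option] at h1 h2
        have h3 : ∀ j, Fintype.card {x // gf δ x = some j} = Fintype.card {x // gf γ x = some j} := by
          intro j; rw [hcards γ hγ j, hcards δ hδ j, hcard j]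
        have := Finset.sum_congr rfl (fun j (_ : j ∈ (univ : Finset (Fin p))) => h3 j)
        omega
  let e : Equiv.Perm (Fin n) := Equiv.ofFiberEquiv (f := gf γ) (g := gf δ)
    (fun o => (Fintype.equivOfCardEq (hfib o)).symm)
  have key : ∀ x, gf δ (e x) = gf γ x := fun x => Equiv.ofFiberEquiv_map _ x
  refine ⟨e, fun j => ?_⟩
  have hsub : (γ j).image e ⊆ δ j := by
    intro y hy
    rw [Finset.mem_image] at hy
    obtain ⟨x, hx, rfl⟩ := hy
    have : gf δ (e x) = some j := by rw [key x, hmem γ hγ x j]; exact hx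
    exact (hmem δ hδ (e x) j).mp this
  refine Finset.eq_of_subset_of_card_le hsub ?_
  rw [Finset.card_image_of_injective _ e.injective, hcard j]

/-- for a primitive monomial `T = t^{γ₁}_{i₁}⋯t^{γ_p}_{i_p}` with
`♯γⱼ = kⱼ > 0`, the symmetrization `Σ_{s∈Sₙ} s·T` vanishes (in the multiplicity-free
quotient) iff the corresponding monomial `ξ^{k₁}_{i₁}⋯ξ^{k_p}_{i_p}` vanishes, and when
both are nonzero the symmetrization equals `M · p*(ξ^{k₁}_{i₁}⋯ξ^{k_p}_{i_p})` for some
nonzero scalar `M`. -/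
theorem symmetrized_primitive_eq_scalar_mul_covHom {n p : ℕ}
    (γ : Fin p → Finset (Fin n)) (i : Fin p → ℕ)
    (hprim : IsPrimitive γ i) :
    ((∑ s : Equiv.Perm (Fin n),
        actMF s (∏ j : Fin p, X ((⟨γ j, hprim.1.1 j⟩ : {δ : Finset (Fin n) // δ.Nonempty}), i j)))
      ∈ mfIdeal n ↔
      (∏ j : Fin p, (X ((⟨(γ j).card,
          Finset.card_pos.mpr (hprim.1.1 j),
          (Finset.card_le_univ _).trans (by simp)⟩ : {k : ℕ // 1 ≤ k ∧ k ≤ n}), i j) : GrPoly n))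
        = 0) ∧
    ((∏ j : Fin p, (X ((⟨(γ j).card,
          Finset.card_pos.mpr (hprim.1.1 j),
          (Finset.card_le_univ _).trans (by simp)⟩ : {k : ℕ // 1 ≤ k ∧ k ≤ n}), i j) : GrPoly n))
        ≠ 0 →
      ∃ M : ℝ, M ≠ 0 ∧
        (∑ s : Equiv.Perm (Fin n),
            actMF s (∏ j : Fin p, X ((⟨γ j, hprim.1.1 j⟩ : {δ : Finset (Fin n) // δ.Nonempty}), i j)))
          - M • covHom n (∏ j : Fin p, X ((⟨(γ j).card,
              Finset.card_pos.mpr (hprim.1.1 j),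
              (Finset.card_le_univ _).trans (by simp)⟩ : {k : ℕ // 1 ≤ k ∧ k ≤ n}), i j))
          ∈ mfIdeal n) := by
  classical
  have hne : ∀ j, (γ j).Nonempty := hprim.1.1
  -- pairwise disjointness of the standard decomposition
  have hdisj : ∀ j l, j ≠ l → Disjoint (γ j) (γ l) := by
    have key : ∀ j l : Fin p, j < l → Disjoint (γ j) (γ l) := by
      intro j l hjl
      rw [Finset.disjoint_left]
      intro x hxj hxl
      rw [hprim.1.2.2 j] at hxj
      rw [hprim.1.2.2 l] at hxl
      simp only [mem_filter, mem_univ, true_and] at hxj hxl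
      have hsub : (univ.filter (· ≤ j) : Finset (Fin p)) ⊆ univ.filter (· < l) := by
        intro m hm
        simp only [mem_filter, mem_univ, true_and] at hm ⊢
        exact lt_of_le_of_lt hm hjl
      have hle : (∑ m ∈ univ.filter (· ≤ j), (γ m).card) ≤
          ∑ m ∈ univ.filter (· < l), (γ m).card := Finset.sum_le_sum_of_subset hsub
      omega
    intro j l hne'
    rcases lt_or_gt_of_ne hne' with h | h
    · exact key j l h
    · exact (key l j h).symm
  set Sub := {δ : Finset (Fin n) // δ.Nonempty} with hSub
  set G : (Fin p → Sub) → MFPoly n := fun f => ∏ j, X (f j, i j) with hG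
  set Φ : Equiv.Perm (Fin n) → (Fin p → Sub) :=
    fun s j => ⟨(γ j).image s, (hne j).image s⟩ with hΦ
  set T : MFPoly n := ∏ j : Fin p, X ((⟨γ j, hne j⟩ : Sub), i j) with hT
  have hact : ∀ s, actMF s T = G (Φ s) := by
    intro s
    rw [hT, map_prod]
    refine Finset.prod_congr rfl fun j _ => ?_
    rw [actMF, rename_X]
  -- the index sets
  set E : Finset (Fin p → Sub) :=
    Fintype.piFinset (fun j => univ.filter fun d : Sub => d.1.card = (γ j).card) with hE
  set D : Finset (Fin p → Sub) :=
    E.filter (fun f => ∀ j l, j ≠ l → Disjoint (f j).1 (f l).1) with hD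
  have hcov : covHom n (∏ j : Fin p, (X ((⟨(γ j).card,
          Finset.card_pos.mpr (hne j),
          (Finset.card_le_univ _).trans (by simp)⟩ : {k : ℕ // 1 ≤ k ∧ k ≤ n}), i j) : GrPoly n))
      = ∑ f ∈ E, G f := by
    rw [map_prod]
    simp only [covHom, aeval_X]
    rw [Finset.prod_univ_sum]
  -- the image of Φ is exactly D
  have hΦD : ∀ s, Φ s ∈ D := by
    intro s
    rw [hD, mem_filter, hE, Fintype.mem_piFinset]
    refine ⟨fun j => ?_, fun j l hjl => ?_⟩
    · simp only [mem_filter, mem_univ, true_and, hΦ]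
      exact Finset.card_image_of_injective _ s.injective
    · simp only [hΦ]
      exact (Finset.disjoint_image s.injective).mpr (hdisj j l hjl)
  have himg : (univ : Finset (Equiv.Perm (Fin n))).image Φ = D := by
    ext f
    simp only [mem_image, mem_univ, true_and]
    constructor
    · rintro ⟨s, rfl⟩; exact hΦD s
    · intro hf
      rw [hD, mem_filter, hE, Fintype.mem_piFinset] at hf
      obtain ⟨hf1, hf2⟩ := hf
      have hcards : ∀ j, (f j).1.card = (γ j).card := by
        intro j; have := hf1 j; simpa using this
      obtain ⟨s, hs⟩ := exists_perm_image γ (fun j => (f j).1) hdisj hf2 hcards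
      refine ⟨s, funext fun j => Subtype.ext ?_⟩
      simpa [hΦ] using hs j
  -- fibers of Φ are constant on D
  set N : ℕ := (univ.filter (fun s => Φ s = Φ 1)).card with hN
  have hNpos : 0 < N := Finset.card_pos.mpr ⟨1, by simp⟩
  have hΦmul : ∀ (σ s : Equiv.Perm (Fin n)) (j : Fin p),
      (Φ (σ * s) j).1 = ((Φ s j).1).image σ := by
    intro σ s j
    simp only [hΦ, Finset.image_image]
    rfl
  have hΦcongr : ∀ (σ a b : Equiv.Perm (Fin n)), Φ a = Φ b → Φ (σ * a) = Φ (σ * b) := by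
    intro σ a b hab
    funext j
    apply Subtype.ext
    rw [hΦmul, hΦmul, show (Φ a j).1 = (Φ b j).1 from congrArg Subtype.val (congrFun hab j)]
  have hfibN : ∀ f ∈ D, (univ.filter (fun s => Φ s = f)).card = N := by
    intro f hf
    have : f ∈ (univ : Finset (Equiv.Perm (Fin n))).image Φ := himg ▸ hf
    rw [mem_image] at this
    obtain ⟨τ, -, rfl⟩ := this
    rw [hN]
    refine Finset.card_bij (fun s _ => τ⁻¹ * s) ?_ ?_ ?_
    · intro a ha
      simp only [mem_filter, mem_univ, true_and] at ha ⊢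
      have := hΦcongr τ⁻¹ a τ ha
      rwa [inv_mul_cancel] at this
    · intro a ha b hb hab
      exact mul_left_cancel hab
    · intro b hb
      refine ⟨τ * b, ?_, by group⟩
      simp only [mem_filter, mem_univ, true_and] at hb ⊢
      have := hΦcongr τ b 1 hb
      rwa [mul_one] at this
  -- the symmetrized sum
  have hsum : (∑ s : Equiv.Perm (Fin n), actMF s T) = N • ∑ f ∈ D, G f := by
    calc (∑ s : Equiv.Perm (Fin n), actMF s T) = ∑ s : Equiv.Perm (Fin n), G (Φ s) :=
          Finset.sum_congr rfl (fun s _ => hact s)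
    _ = ∑ f ∈ univ.image Φ, (univ.filter fun s => Φ s = f).card • G f := Finset.sum_comp G Φ
    _ = ∑ f ∈ D, N • G f := by
          rw [himg]; exact Finset.sum_congr rfl fun f hf => by rw [hfibN f hf]
    _ = N • ∑ f ∈ D, G f := (Finset.smul_sum).symm
  -- terms with non-disjoint supports lie in the ideal
  have hGmem : ∀ f ∈ E \ D, G f ∈ mfIdeal n := by
    intro f hf
    rw [mem_sdiff] at hf
    obtain ⟨hfE, hfD⟩ := hf
    have hnd : ∃ j l, j ≠ l ∧ ¬ Disjoint (f j).1 (f l).1 := by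
      by_contra hcon
      push_neg at hcon
      exact hfD (by rw [hD, mem_filter]; exact ⟨hfE, fun j l hjl => hcon j l hjl⟩)
    obtain ⟨j, l, hjl, hndis⟩ := hnd
    have hgen : (X (f j, i j) : MFPoly n) * X (f l, i l) ∈ mfIdeal n :=
      Ideal.subset_span ⟨f j, f l, i j, i l, hndis, rfl⟩
    have e1 : G f = X (f j, i j) * (X (f l, i l) * ∏ m ∈ (univ.erase j).erase l,
        (X (f m, i m) : MFPoly n)) := by
      show (∏ m : Fin p, (X (f m, i m) : MFPoly n)) = _
      rw [← Finset.mul_prod_erase _ (fun m => (X (f m, i m) : MFPoly n)) (mem_univ j),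
        ← Finset.mul_prod_erase _ (fun m => (X (f m, i m) : MFPoly n))
          (Finset.mem_erase.mpr ⟨Ne.symm hjl, mem_univ l⟩)]
    rw [e1, ← mul_assoc]
    exact Ideal.mul_mem_right _ _ hgen
  -- the main positive sum is not in the ideal
  set v : Fin p → Vvar n := fun j => ((⟨γ j, hne j⟩ : Sub), i j) with hv
  have hvinj : Function.Injective v := by
    intro a b hab
    by_contra hne'
    have h1 : γ a = γ b := congrArg (fun x : Vvar n => (Prod.fst x).1) hab
    have h2 := hdisj a b hne'
    rw [h1] at h2
    exact (hne b).ne_empty (by simpa using disjoint_self.mp h2)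
  set m0 : Vvar n →₀ ℕ := ∑ j : Fin p, Finsupp.single (v j) 1 with hm0
  have hm0a : ∀ a, m0 a = (univ.filter fun j => v j = a).card := by
    intro a
    rw [hm0, Finset.sum_apply', Finset.card_filter]
    refine Finset.sum_congr rfl fun j _ => ?_
    rw [Finsupp.single_apply]
  have hm0le : ∀ a, m0 a ≤ 1 := by
    intro a
    rw [hm0a]
    refine Finset.card_le_one.mpr fun b hb c hc => ?_
    simp only [mem_filter] at hb hc
    exact hvinj (hb.2.trans hc.2.symm)
  have hγD : (fun j => (⟨γ j, hne j⟩ : Sub)) ∈ D := by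
    rw [hD, mem_filter, hE, Fintype.mem_piFinset]
    exact ⟨fun j => by simp, fun j l hjl => hdisj j l hjl⟩
  have hnotin : (∑ f ∈ D, G f) ∉ mfIdeal n := by
    intro hmem
    have hIdeq : mfIdeal n = Ideal.span ((fun e => (monomial e (1:ℝ) : MFPoly n)) ''
        {e | ∃ (d d' : Sub) (j j' : ℕ), ¬ Disjoint d.1 d'.1 ∧
              e = Finsupp.single ((d, j) : Vvar n) 1 + Finsupp.single ((d', j') : Vvar n) 1}) := by
      rw [mfIdeal]
      congr 1
      ext q
      constructor
      · rintro ⟨d, d', j, j', hnd, rfl⟩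
        exact ⟨_, ⟨d, d', j, j', hnd, rfl⟩, by rw [X, X, monomial_mul, one_mul]⟩
      · rintro ⟨e, ⟨d, d', j, j', hnd, rfl⟩, rfl⟩
        exact ⟨d, d', j, j', hnd, by rw [X, X, monomial_mul, one_mul]⟩
    rw [hIdeq, mem_ideal_span_monomial_image] at hmem
    have hsupp : m0 ∈ (∑ f ∈ D, G f).support := by
      rw [mem_support_iff]
      have hco : coeff m0 (∑ f ∈ D, G f) = ∑ f ∈ D, coeff m0 (G f) := coeff_sum _ _ _
      have hterm : ∀ f : Fin p → Sub, coeff m0 (G f) =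
          if (∑ j : Fin p, Finsupp.single ((f j, i j) : Vvar n) 1) = m0 then 1 else 0 := by
        intro f
        rw [hG]
        show coeff m0 (∏ j : Fin p, (X ((f j, i j) : Vvar n) : MFPoly n)) = _
        rw [prod_X_eq_monomial'', coeff_monomial]
      have hone : coeff m0 (G (fun j => (⟨γ j, hne j⟩ : Sub))) = 1 := by
        rw [hterm]
        exact if_pos rfl
      have hle1 : (1:ℝ) ≤ ∑ f ∈ D, coeff m0 (G f) := by
        rw [← hone]
        refine Finset.single_le_sum (f := fun f => coeff m0 (G f)) (fun f _ => ?_) hγD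
        show (0:ℝ) ≤ coeff m0 (G f)
        rw [hterm f]
        split <;> norm_num
      rw [hco]
      intro h0
      rw [h0] at hle1
      norm_num at hle1
    obtain ⟨e, ⟨d, d', j0, j0', hnd, rfl⟩, hlee⟩ := hmem m0 hsupp
    have hle : ∀ a, ((Finsupp.single ((d, j0) : Vvar n) 1
        + Finsupp.single ((d', j0') : Vvar n) 1 : Vvar n →₀ ℕ)) a ≤ m0 a := fun a => hlee a
    by_cases hdd : ((d, j0) : Vvar n) = (d', j0')
    · have h := hle (d, j0)
      have h2 : (2:ℕ) ≤ m0 ((d, j0) : Vvar n) := by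
        simpa [Finsupp.add_apply, Finsupp.single_apply, hdd] using h
      have := hm0le ((d, j0) : Vvar n)
      omega
    · have h1 : 1 ≤ m0 ((d, j0) : Vvar n) := le_trans (by simp [Finsupp.add_apply, Finsupp.single_apply]) (hle (d, j0))
      have h2 : 1 ≤ m0 ((d', j0') : Vvar n) := le_trans (by simp [Finsupp.add_apply, Finsupp.single_apply, hdd]) (hle (d', j0'))
      rw [hm0a] at h1 h2
      obtain ⟨j1, hj1⟩ := Finset.card_pos.mp h1
      obtain ⟨j2, hj2⟩ := Finset.card_pos.mp h2
      rw [mem_filter] at hj1 hj2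
      have hj12 : j1 ≠ j2 := by
        intro hh
        exact hdd ((hj1.2.symm.trans (by rw [hh])).trans hj2.2)
      have hg1 : γ j1 = d.1 := congrArg (fun x : Vvar n => (Prod.fst x).1) hj1.2
      have hg2 : γ j2 = d'.1 := congrArg (fun x : Vvar n => (Prod.fst x).1) hj2.2
      exact hnd (hg1 ▸ hg2 ▸ hdisj j1 j2 hj12)
  -- conclusion
  have hprodXne : ∀ (w : Fin p → Avar n), (∏ j : Fin p, (X (w j) : GrPoly n)) ≠ 0 := by
    intro w
    rw [prod_X_eq_monomial'']
    simp [monomial_eq_zero]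
  refine ⟨iff_of_false ?_ (hprodXne _), fun _ => ⟨(N:ℝ), Nat.cast_ne_zero.mpr hNpos.ne', ?_⟩⟩
  · intro hmem'
    have hmem2 : (∑ s : Equiv.Perm (Fin n), actMF s T) ∈ mfIdeal n := hmem'
    rw [hsum] at hmem2
    have hCN : ((N : MFPoly n)) = C ((N:ℝ)) := (map_natCast (C : ℝ →+* MFPoly n) N).symm
    have hS2 : (∑ f ∈ D, G f) = C ((N:ℝ)⁻¹) * (N • ∑ f ∈ D, G f) := by
      rw [nsmul_eq_mul, hCN, ← mul_assoc, ← C_mul,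
        inv_mul_cancel₀ (Nat.cast_ne_zero.mpr hNpos.ne' : (N:ℝ) ≠ 0), C_1, one_mul]
    exact hnotin (hS2 ▸ Ideal.mul_mem_left _ _ hmem2)
  · have hmemrest : (∑ f ∈ E \ D, G f) ∈ mfIdeal n :=
      Ideal.sum_mem _ (fun f hf => hGmem f hf)
    have hDE : D ⊆ E := filter_subset _ _
    have hsplit : (∑ f ∈ E, G f) = ∑ f ∈ E \ D, G f + ∑ f ∈ D, G f :=
      (Finset.sum_sdiff hDE).symm
    have hfinal : (∑ s : Equiv.Perm (Fin n), actMF s T)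
        - (N:ℝ) • covHom n (∏ j : Fin p, (X ((⟨(γ j).card,
            Finset.card_pos.mpr (hne j),
            (Finset.card_le_univ _).trans (by simp)⟩ : {k : ℕ // 1 ≤ k ∧ k ≤ n}), i j) : GrPoly n))
        = -((N:ℝ) • ∑ f ∈ E \ D, G f) := by
      rw [hsum, hcov, hsplit, Nat.cast_smul_eq_nsmul, Nat.cast_smul_eq_nsmul, smul_add]
      abel
    have hmemneg : -((N:ℝ) • ∑ f ∈ E \ D, G f) ∈ mfIdeal n := by
      refine (mfIdeal n).neg_mem ?_
      rw [smul_eq_C_mul]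
      exact Ideal.mul_mem_left _ _ hmemrest
    exact hfinal ▸ hmemneg
end
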